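/- Let K be a field of characteristic zero, a ∈ lie_m^m and b ∈ lie_n^n tuples, σ a permutation of {1,…,m}, τ a permutation of {1,…,n}, and 1 ≤ i ≤ m. Define relabeled tuples (a^σ)_k := P_σ(a_{σ(k)}) and (b^τ)_k := P_τ(b_{τ(k)}). Then, as derivations of lie_{m+n−1}: D_{a^σ ∘_{σ⁻¹(i)} b^τ} = P_{σ∘_iτ} ∘ D_{a∘_ib} ∘ P_{σ∘_iτ}⁻¹, i.e., the partial composition of tangential derivations is equivariant with respect to relabeling by the inserted permutation σ∘_iτ. -/

import Mathlib

open FreeLieAlgebra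

variable (K : Type) [Field K] [CharZero K]

/-- The free Lie algebra over `K` on `N` generators `x_1, …, x_N`
(indexed here 0-based by `Fin N`). -/
abbrev lieF (N : ℕ) : Type := FreeLieAlgebra K (Fin N)

/-- The `(k+1)`-st generator of `lieF K N` (0-based index `k`), junk value `0` out of range. -/
noncomputable def xg (N k : ℕ) : lieF K N :=
  if h : k < N then FreeLieAlgebra.of K (⟨k, h⟩ : Fin N) else 0

/-- The Lie algebra homomorphism `Φ_i : lie_m → lie_{m+n-1}` sending (0-based) `x_j ↦ x_j`
for `j < i`, `x_i ↦ x_i + x_{i+1} + ⋯ + x_{i+n-1}`, and `x_j ↦ x_{j+n-1}` for `j > i`. -/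
noncomputable def PhiL (m n i : ℕ) : lieF K m →ₗ⁅K⁆ lieF K (m + n - 1) :=
  FreeLieAlgebra.lift K fun j : Fin m =>
    if (j : ℕ) < i then xg K (m + n - 1) (j : ℕ)
    else if (j : ℕ) = i then ∑ t : Fin n, xg K (m + n - 1) (i + (t : ℕ))
    else xg K (m + n - 1) ((j : ℕ) + n - 1)

/-- The Lie algebra homomorphism `Ψ_i : lie_n → lie_{m+n-1}` sending (0-based)
`x_j ↦ x_{i+j}`. -/
noncomputable def PsiL (m n i : ℕ) : lieF K n →ₗ⁅K⁆ lieF K (m + n - 1) :=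
  FreeLieAlgebra.lift K fun j : Fin n => xg K (m + n - 1) (i + (j : ℕ))

/-- The partial composition `f ∘_i g := Φ_i(f) + Ψ_i(g)` of free Lie algebra elements
(the pivot `i` is 0-based). -/
noncomputable def compL {m n : ℕ} (f : lieF K m) (i : ℕ) (g : lieF K n) :
    lieF K (m + n - 1) :=
  PhiL K m n i f + PsiL K m n i g

/-- The canonical identification `lie_N ≅ lie_{N'}` for `N = N'`. -/
noncomputable def recastL {N N' : ℕ} (hNN : N = N') : lieF K N →ₗ⁅K⁆ lieF K N' :=
  FreeLieAlgebra.lift K fun j => FreeLieAlgebra.of K (Fin.cast hNN j)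

/-- Entry of a tuple at a natural-number index (junk value `0` out of range). -/
noncomputable def tget {N : ℕ} (a : Fin N → lieF K N) (k : ℕ) : lieF K N :=
  if h : k < N then a ⟨k, h⟩ else 0

/-- The composed tuple `a ∘_i b ∈ (lie_{m+n-1})^{m+n-1}` (0-based indices): its entries are
`Φ_i(a_j)` in slot `j` for `j < i`, `Φ_i(a_i) + Ψ_i(b_k)` in slot `i+k` for `0 ≤ k < n`,
and `Φ_i(a_j)` in slot `j+n-1` for `j > i`. -/
noncomputable def compTup {m n : ℕ} (a : Fin m → lieF K m) (i : ℕ)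
    (b : Fin n → lieF K n) : Fin (m + n - 1) → lieF K (m + n - 1) := fun k =>
  if (k : ℕ) < i then PhiL K m n i (tget K a (k : ℕ))
  else if (k : ℕ) < i + n then
    PhiL K m n i (tget K a i) + PsiL K m n i (tget K b ((k : ℕ) - i))
  else PhiL K m n i (tget K a ((k : ℕ) + 1 - n))

/-- The Lie algebra of derivations of `lieF K N`. -/
abbrev DerL (N : ℕ) : Type := LieDerivation K (lieF K N) (lieF K N)

/-- The Lie algebra automorphism `P_σ` of `lie_N` with `P_σ(x_j) = x_{σ⁻¹(j)}`. -/
noncomputable def permL {N : ℕ} (σ : Equiv.Perm (Fin N)) : lieF K N →ₗ⁅K⁆ lieF K N :=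
  FreeLieAlgebra.lift K fun j => FreeLieAlgebra.of K (σ⁻¹ j)

/-- The value of a permutation of `Fin N` at a natural number (junk value `k` out of
range). -/
def permVal {N : ℕ} (σ : Equiv.Perm (Fin N)) (k : ℕ) : ℕ :=
  if h : k < N then ((σ ⟨k, h⟩ : Fin N) : ℕ) else k

/-!
Write `p = σ⁻¹(i)`. On generators one checks that `P_ρ ∘ Φ_i = Φ_p ∘ P_σ` and
`P_ρ ∘ Ψ_i = Ψ_p ∘ P_τ`: the block `x_i + ⋯ + x_{i+n-1}` is carried to
`x_p + ⋯ + x_{p+n-1}` because `ρ` acts on it through `τ`, and every other generator is moved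
as `σ` moves the slots of `a`. Consequently the composed tuples are related slotwise,
`(a^σ ∘_p b^τ)_k = P_ρ((a ∘_i b)_{ρ(k)})`. Both sides of the claim are derivations of a free
Lie algebra, hence determined by their values on the generators `x_k`, and on `x_k` the two
values are `[x_k, (a^σ ∘_p b^τ)_k]` and `P_ρ [x_{ρ(k)}, (a ∘_i b)_{ρ(k)}]`, which agree by
the slotwise relation.
-/

namespace FreeLieAlgebra

variable (R X : Type*) [CommRing R]

theorem lieSpan_range_of :
    LieSubalgebra.lieSpan R (FreeLieAlgebra R X) (Set.range (of R)) = ⊤ := by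
  set S := LieSubalgebra.lieSpan R (FreeLieAlgebra R X) (Set.range (of R))
  let f : FreeLieAlgebra R X →ₗ⁅R⁆ S :=
    lift R fun x => ⟨of R x, LieSubalgebra.subset_lieSpan ⟨x, rfl⟩⟩
  have hf : ∀ w, (f w : FreeLieAlgebra R X) = w :=
    LieHom.congr_fun (f := S.incl.comp f) (g := LieHom.id) (hom_ext fun x => by simp [f])
  exact eq_top_iff.2 fun w _ => hf w ▸ (f w).2

variable {R X}

theorem lieDerivation_ext {D₁ D₂ : LieDerivation R (FreeLieAlgebra R X) (FreeLieAlgebra R X)}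
    (h : ∀ x, D₁ (of R x) = D₂ (of R x)) : D₁ = D₂ :=
  LieDerivation.ext_of_lieSpan_eq_top _ (lieSpan_range_of R X) (by rintro _ ⟨x, rfl⟩; exact h x)

end FreeLieAlgebra

namespace LieDerivation

variable {R L L' : Type*} [CommRing R] [LieRing L] [LieAlgebra R L] [LieRing L'] [LieAlgebra R L']

def conj (D : LieDerivation R L L) (f : L →ₗ⁅R⁆ L') (g : L' →ₗ⁅R⁆ L)
    (hfg : Function.LeftInverse f g) : LieDerivation R L' L' where
  toLinearMap := f.toLinearMap ∘ₗ D.toLinearMap ∘ₗ g.toLinearMap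
  leibniz' a b := by
    change f (D (g ⁅a, b⁆)) = ⁅a, f (D (g b))⁆ - ⁅b, f (D (g a))⁆
    rw [LieHom.map_lie, apply_lie_eq_sub, map_sub, LieHom.map_lie, LieHom.map_lie, hfg, hfg]

theorem conj_apply (D : LieDerivation R L L) (f : L →ₗ⁅R⁆ L') (g : L' →ₗ⁅R⁆ L)
    (hfg : Function.LeftInverse f g) (x : L') : D.conj f g hfg x = f (D (g x)) :=
  rfl

end LieDerivation

open FreeLieAlgebra

variable {F : Type} [Field F]

section Generators

variable {N : ℕ}

theorem permVal_coe (σ : Equiv.Perm (Fin N)) (k : Fin N) : permVal σ k = σ k := by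
  simp [permVal]

theorem permVal_of_lt (σ : Equiv.Perm (Fin N)) {k : ℕ} (hk : k < N) :
    permVal σ k = σ ⟨k, hk⟩ :=
  permVal_coe σ ⟨k, hk⟩

theorem permVal_lt (σ : Equiv.Perm (Fin N)) {k : ℕ} (hk : k < N) : permVal σ k < N :=
  permVal_of_lt σ hk ▸ (σ _).2

theorem coe_eq_permVal_symm_iff (σ : Equiv.Perm (Fin N)) {i : ℕ} (hi : i < N) (j : Fin N) :
    (j : ℕ) = permVal σ.symm i ↔ (σ j : ℕ) = i := by
  rw [permVal_of_lt _ hi, Fin.val_inj, Equiv.eq_symm_apply, Fin.ext_iff]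

theorem xg_coe (k : Fin N) : xg F N k = of F k := by
  simp [xg]

theorem tget_coe (a : Fin N → lieF F N) (k : Fin N) : tget F a k = a k := by
  simp [tget]

theorem permL_of (σ : Equiv.Perm (Fin N)) (j : Fin N) : permL F σ (of F j) = of F (σ⁻¹ j) :=
  lift_of_apply _ _

theorem permL_leftInverse (σ : Equiv.Perm (Fin N)) :
    Function.LeftInverse (permL F σ) (permL F σ⁻¹) :=
  LieHom.congr_fun (f := (permL F σ).comp (permL F σ⁻¹)) (g := LieHom.id)
    (hom_ext fun j => by simp [permL_of])

/-- Out of range both generators are the junk value `0`, so no bound on `k` is needed. -/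
theorem permL_xg (ρ : Equiv.Perm (Fin N)) {k v : ℕ} (h : permVal ρ k = v) :
    permL F ρ (xg F N v) = xg F N k := by
  subst h
  by_cases hk : k < N
  · simp [permVal_of_lt ρ hk, permL_of, xg, hk]
  · simp [permVal, xg, hk]

end Generators

/-- The slot of `a ∘_i b` that carries `Φ_i(a_j)`, for `j ≠ i`. -/
def compSlot (n i j : ℕ) : ℕ := if j < i then j else j + n - 1

theorem compSlot_lt {m n i j : ℕ} (hj : j < m) (hi : i < m) (hji : j ≠ i) :
    compSlot n i j < m + n - 1 := by
  unfold compSlot; split_ifs <;> omega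

theorem exists_eq_compSlot_or_eq_add {m n p : ℕ} (hp : p < m) (k : Fin (m + n - 1)) :
    (∃ j : Fin m, (j : ℕ) ≠ p ∧ (k : ℕ) = compSlot n p j) ∨
      ∃ s : Fin n, (k : ℕ) = p + s := by
  have hk := k.2
  rcases lt_or_ge (k : ℕ) p with h | h
  · exact .inl ⟨⟨k, by omega⟩, by dsimp only; omega, (if_pos h).symm⟩
  rcases lt_or_ge (k : ℕ) (p + n) with h' | h'
  · exact .inr ⟨⟨k - p, by omega⟩, by dsimp only; omega⟩
  · refine .inl ⟨⟨k + 1 - n, by omega⟩, by dsimp only; omega, ?_⟩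
    rw [compSlot, if_neg (by dsimp only; omega)]
    dsimp only
    omega

section Composition

variable {m n : ℕ}

theorem PhiL_of (i : ℕ) (j : Fin m) :
    PhiL F m n i (of F j) =
      if (j : ℕ) = i then ∑ t : Fin n, xg F (m + n - 1) (i + t)
      else xg F (m + n - 1) (compSlot n i j) := by
  simp only [PhiL, lift_of_apply, compSlot]
  split_ifs <;> first | rfl | omega

theorem PsiL_of (i : ℕ) (j : Fin n) : PsiL F m n i (of F j) = xg F (m + n - 1) (i + j) :=
  lift_of_apply _ _

theorem compTup_of_eq_compSlot (a : Fin m → lieF F m) (b : Fin n → lieF F n) {i : ℕ}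
    {j : Fin m} (hj : (j : ℕ) ≠ i) {k : Fin (m + n - 1)} (hk : (k : ℕ) = compSlot n i j) :
    compTup F a i b k = PhiL F m n i (a j) := by
  unfold compSlot at hk
  split_ifs at hk with hji
  · rw [compTup, if_pos (by omega), hk, tget_coe]
  · rw [compTup, if_neg (by omega), if_neg (by omega), show (k : ℕ) + 1 - n = j by omega,
      tget_coe]

theorem compTup_of_eq_add (a : Fin m → lieF F m) (b : Fin n → lieF F n) {i : ℕ} (hi : i < m)
    (s : Fin n) {k : Fin (m + n - 1)} (hk : (k : ℕ) = i + s) :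
    compTup F a i b k = PhiL F m n i (a ⟨i, hi⟩) + PsiL F m n i (b s) := by
  rw [compTup, if_neg (by omega), if_pos (by omega), show (k : ℕ) - i = s by omega, tget_coe,
    ← tget_coe a ⟨i, hi⟩]

end Composition

/-- `ρ = σ ∘_i τ`: the paper's case formulas for the inserted permutation, in 0-based indices
and with `σ⁻¹(i)` written `permVal σ.symm i`. -/
def IsInsertedPerm {m n : ℕ} (σ : Equiv.Perm (Fin m)) (i : ℕ) (τ : Equiv.Perm (Fin n))
    (ρ : Equiv.Perm (Fin (m + n - 1))) : Prop :=
  ∀ k : ℕ, k < m + n - 1 →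
    permVal ρ k =
      if k < permVal σ.symm i then
        if permVal σ k < i then permVal σ k else permVal σ k + n - 1
      else if k < permVal σ.symm i + n then
        permVal τ (k - permVal σ.symm i) + i
      else if permVal σ (k + 1 - n) < i then permVal σ (k + 1 - n)
      else permVal σ (k + 1 - n) + n - 1

namespace IsInsertedPerm

variable {m n : ℕ} {σ : Equiv.Perm (Fin m)} {i : ℕ} {τ : Equiv.Perm (Fin n)}
  {ρ : Equiv.Perm (Fin (m + n - 1))}

theorem apply_add (hρ : IsInsertedPerm σ i τ ρ) (hi : i < m) (s : Fin n) :
    permVal ρ (permVal σ.symm i + s) = i + τ s := by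
  have hp := permVal_lt σ.symm hi
  have h := hρ (permVal σ.symm i + s) (by omega)
  rw [if_neg (by omega), if_pos (by omega), Nat.add_sub_cancel_left, permVal_coe] at h
  omega

theorem apply_compSlot (hρ : IsInsertedPerm σ i τ ρ) (hi : i < m) (j : Fin m)
    (hj : (j : ℕ) ≠ permVal σ.symm i) :
    permVal ρ (compSlot n (permVal σ.symm i) j) = compSlot n i (σ j) := by
  have hp := permVal_lt σ.symm hi
  rcases Nat.lt_or_gt_of_ne hj with hjp | hjp
  · have h := hρ j (by omega)
    rw [if_pos hjp, permVal_coe] at h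
    rwa [compSlot, if_pos hjp]
  · have h := hρ (j + n - 1) (by omega)
    rw [if_neg (by omega), if_neg (by omega), show (j : ℕ) + n - 1 + 1 - n = j by omega,
      permVal_coe] at h
    rwa [compSlot, if_neg (by omega)]

theorem permL_PhiL (hρ : IsInsertedPerm σ i τ ρ) (hi : i < m) (x : lieF F m) :
    permL F ρ (PhiL F m n i x) = PhiL F m n (permVal σ.symm i) (permL F σ x) := by
  suffices
      (permL F ρ).comp (PhiL F m n i) = (PhiL F m n (permVal σ.symm i)).comp (permL F σ) from
    LieHom.congr_fun this x
  refine hom_ext fun j => ?_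
  obtain ⟨j, rfl⟩ := σ.surjective j
  simp only [LieHom.comp_apply, permL_of, Equiv.Perm.inv_def, Equiv.symm_apply_apply, PhiL_of,
    coe_eq_permVal_symm_iff σ hi]
  split_ifs with hj
  · rw [map_sum]
    exact (Fintype.sum_equiv τ _ _ fun s => (permL_xg ρ (hρ.apply_add hi s)).symm).symm
  · exact permL_xg ρ (hρ.apply_compSlot hi j (mt (coe_eq_permVal_symm_iff σ hi j).1 hj))

theorem permL_PsiL (hρ : IsInsertedPerm σ i τ ρ) (hi : i < m) (x : lieF F n) :
    permL F ρ (PsiL F m n i x) = PsiL F m n (permVal σ.symm i) (permL F τ x) := by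
  suffices
      (permL F ρ).comp (PsiL F m n i) = (PsiL F m n (permVal σ.symm i)).comp (permL F τ) from
    LieHom.congr_fun this x
  refine hom_ext fun j => ?_
  obtain ⟨j, rfl⟩ := τ.surjective j
  simp only [LieHom.comp_apply, permL_of, Equiv.Perm.inv_def, Equiv.symm_apply_apply, PsiL_of]
  exact permL_xg ρ (hρ.apply_add hi j)

theorem compTup_relabel (hρ : IsInsertedPerm σ i τ ρ) (hi : i < m) (a : Fin m → lieF F m)
    (b : Fin n → lieF F n) (k : Fin (m + n - 1)) :
    compTup F (fun s => permL F σ (a (σ s))) (permVal σ.symm i)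
        (fun s => permL F τ (b (τ s))) k =
      permL F ρ (compTup F a i b (ρ k)) := by
  have hp := permVal_lt σ.symm hi
  have hρk : ((ρ k : Fin (m + n - 1)) : ℕ) = permVal ρ k := (permVal_coe ρ k).symm
  rcases exists_eq_compSlot_or_eq_add hp k with ⟨j, hj, hk⟩ | ⟨s, hk⟩
  · have hσj : (σ j : ℕ) ≠ i := mt (coe_eq_permVal_symm_iff σ hi j).2 hj
    rw [compTup_of_eq_compSlot _ _ hj hk,
      compTup_of_eq_compSlot _ _ hσj (by rw [hρk, hk, hρ.apply_compSlot hi j hj])]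
    exact (hρ.permL_PhiL hi _).symm
  · have hσp : σ ⟨permVal σ.symm i, hp⟩ = ⟨i, hi⟩ :=
      Fin.ext ((coe_eq_permVal_symm_iff σ hi _).1 rfl)
    rw [compTup_of_eq_add _ _ hp s hk,
      compTup_of_eq_add _ _ hi (τ s) (by rw [hρk, hk, hρ.apply_add hi s]), map_add,
      hρ.permL_PhiL hi, hρ.permL_PsiL hi, hσp]

end IsInsertedPerm

theorem tangential_comp_equivariant (m n : ℕ)
    (a : Fin m → lieF K m) (b : Fin n → lieF K n)
    (σ : Equiv.Perm (Fin m)) (τ : Equiv.Perm (Fin n)) (i : ℕ) (hi : i < m)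
    (ρ : Equiv.Perm (Fin (m + n - 1)))
    (hρ : ∀ k : ℕ, k < m + n - 1 →
      permVal ρ k =
        if k < permVal σ.symm i then
          if permVal σ k < i then permVal σ k else permVal σ k + n - 1
        else if k < permVal σ.symm i + n then
          permVal τ (k - permVal σ.symm i) + i
        else if permVal σ (k + 1 - n) < i then permVal σ (k + 1 - n)
        else permVal σ (k + 1 - n) + n - 1)
    (U V : DerL K (m + n - 1))
    (hU : ∀ k : Fin (m + n - 1),
      U (FreeLieAlgebra.of K k) = ⁅FreeLieAlgebra.of K k, compTup K a i b k⁆)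
    (hV : ∀ k : Fin (m + n - 1),
      V (FreeLieAlgebra.of K k) =
        ⁅FreeLieAlgebra.of K k,
          compTup K (fun s => permL K σ (a (σ s))) (permVal σ.symm i)
            (fun s => permL K τ (b (τ s))) k⁆) :
    ∀ w : lieF K (m + n - 1), V w = permL K ρ (U (permL K ρ⁻¹ w)) := by
  have hVU : V = U.conj (permL K ρ) (permL K ρ⁻¹) (permL_leftInverse ρ) :=
    lieDerivation_ext fun k => by
      rw [hV, LieDerivation.conj_apply, permL_of, inv_inv, hU, LieHom.map_lie, permL_of,
        Equiv.Perm.inv_def, Equiv.symm_apply_apply, IsInsertedPerm.compTup_relabel hρ hi]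
  intro w
  rw [hVU, LieDerivation.conj_apply]
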